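/- arXiv:2105.11704 — 9 statements merged into one kernel-verified Lean document; each statement's English description precedes it below -/
import Mathlib

section
/- Let ℓ > 0 and let K(Σ) = √(Σ² + ℓ²) − ℓ·log(√(Σ² + ℓ²) + ℓ) + ℓ·log Σ for Σ > 0. Then for every Σ > 0, K′(Σ)·(K′(Σ) + Σ·K″(Σ)) = 1. -/
/-!
Writing `r = √(Σ² + ℓ²)`, the three terms of `K` combine to `K′(Σ) = r / Σ`, and then
`K″(Σ) = -ℓ² / (r Σ²)`, so `K′ + Σ K″ = (r² - ℓ²) / (r Σ) = Σ / r`, whose product with `r / Σ` is `1`.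
-/

open Real Topology

noncomputable def eguchiHansonPotential (ℓ S : ℝ) : ℝ :=
  √(S ^ 2 + ℓ ^ 2) - ℓ * log (√(S ^ 2 + ℓ ^ 2) + ℓ) + ℓ * log S

section

variable {ℓ x : ℝ}

lemma sq_add_sq_pos (hx : x ≠ 0) : 0 < x ^ 2 + ℓ ^ 2 := by
  positivity

lemma sqrt_sq_add_sq_pos (hx : x ≠ 0) : 0 < √(x ^ 2 + ℓ ^ 2) :=
  sqrt_pos.2 (sq_add_sq_pos hx)

lemma sq_sqrt_sq_add_sq : √(x ^ 2 + ℓ ^ 2) ^ 2 = x ^ 2 + ℓ ^ 2 :=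
  sq_sqrt (by positivity)

lemma sqrt_sq_add_sq_add_pos (hx : x ≠ 0) : 0 < √(x ^ 2 + ℓ ^ 2) + ℓ := by
  have hlt : |ℓ| < √(x ^ 2 + ℓ ^ 2) := by
    rw [← sqrt_sq_eq_abs]
    exact sqrt_lt_sqrt (sq_nonneg ℓ) (lt_add_of_pos_left _ (by positivity))
  linarith [neg_abs_le ℓ]

lemma hasDerivAt_sqrt_sq_add_sq (hx : x ≠ 0) :
    HasDerivAt (fun y => √(y ^ 2 + ℓ ^ 2)) (x / √(x ^ 2 + ℓ ^ 2)) x := by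
  convert ((hasDerivAt_pow 2 x).add_const (ℓ ^ 2)).sqrt (sq_add_sq_pos hx).ne' using 1
  have := (sqrt_sq_add_sq_pos (ℓ := ℓ) hx).ne'
  field_simp
  ring

lemma hasDerivAt_eguchiHansonPotential (hx : x ≠ 0) :
    HasDerivAt (eguchiHansonPotential ℓ) (√(x ^ 2 + ℓ ^ 2) / x) x := by
  have hr := hasDerivAt_sqrt_sq_add_sq (ℓ := ℓ) hx
  have hlog := (hr.add_const ℓ).log (sqrt_sq_add_sq_add_pos hx).ne'
  refine ((hr.sub (hlog.const_mul ℓ)).add ((hasDerivAt_log hx).const_mul ℓ)).congr_deriv ?_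
  have := (sqrt_sq_add_sq_pos (ℓ := ℓ) hx).ne'
  have := (sqrt_sq_add_sq_add_pos (ℓ := ℓ) hx).ne'
  field_simp
  linear_combination -√(x ^ 2 + ℓ ^ 2) * sq_sqrt_sq_add_sq (x := x) (ℓ := ℓ)

lemma deriv_eguchiHansonPotential (hx : x ≠ 0) :
    deriv (eguchiHansonPotential ℓ) x = √(x ^ 2 + ℓ ^ 2) / x :=
  (hasDerivAt_eguchiHansonPotential hx).deriv

lemma hasDerivAt_deriv_eguchiHansonPotential (hx : x ≠ 0) :
    HasDerivAt (deriv (eguchiHansonPotential ℓ)) (-ℓ ^ 2 / (√(x ^ 2 + ℓ ^ 2) * x ^ 2)) x := by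
  have hK' : deriv (eguchiHansonPotential ℓ) =ᶠ[𝓝 x] fun y => √(y ^ 2 + ℓ ^ 2) / y := by
    filter_upwards [isOpen_ne.mem_nhds hx] with y hy
    exact deriv_eguchiHansonPotential hy
  refine HasDerivAt.congr_of_eventuallyEq ?_ hK'
  refine ((hasDerivAt_sqrt_sq_add_sq hx).div (hasDerivAt_id' x) hx).congr_deriv ?_
  have := (sqrt_sq_add_sq_pos (ℓ := ℓ) hx).ne'
  field_simp
  linear_combination -sq_sqrt_sq_add_sq (x := x) (ℓ := ℓ)

end

theorem stmt_1_general (ℓ : ℝ) (K : ℝ → ℝ)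
    (hK : ∀ S : ℝ, K S =
      Real.sqrt (S ^ 2 + ℓ ^ 2) - ℓ * Real.log (Real.sqrt (S ^ 2 + ℓ ^ 2) + ℓ)
        + ℓ * Real.log S) :
    ∀ S : ℝ, 0 < S →
      deriv K S * (deriv K S + S * deriv (deriv K) S) = 1 := by
  intro S hS
  obtain rfl : K = eguchiHansonPotential ℓ := funext hK
  rw [deriv_eguchiHansonPotential hS.ne', (hasDerivAt_deriv_eguchiHansonPotential hS.ne').deriv]
  have hr := sqrt_sq_add_sq_pos (ℓ := ℓ) hS.ne'
  field_simp
  linear_combination sq_sqrt_sq_add_sq (x := S) (ℓ := ℓ)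

/-- Let `ℓ > 0` and `K Σ = √(Σ² + ℓ²) − ℓ·log(√(Σ² + ℓ²) + ℓ) + ℓ·log Σ`
for `Σ > 0`.  Then for every `Σ > 0`, `K′(Σ)·(K′(Σ) + Σ·K″(Σ)) = 1`
(the Monge–Ampère / Ricci-flatness equation of the Eguchi–Hanson metric). -/
theorem stmt_1 (ℓ : ℝ) (hℓ : 0 < ℓ) (K : ℝ → ℝ)
    (hK : ∀ S : ℝ, K S =
      Real.sqrt (S ^ 2 + ℓ ^ 2) - ℓ * Real.log (Real.sqrt (S ^ 2 + ℓ ^ 2) + ℓ)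
        + ℓ * Real.log S) :
    ∀ S : ℝ, 0 < S →
      deriv K S * (deriv K S + S * deriv (deriv K) S) = 1 :=
  stmt_1_general ℓ K hK
end

section
/- Let K₃(Σ) = π/(2√3) + (1/6)·[6·(Σ³+1)^{1/3} + 2·log((Σ³+1)^{1/3} − 1) − log((Σ³+1)^{2/3} + (Σ³+1)^{1/3} + 1) − 2√3·arctan((2·(Σ³+1)^{1/3} + 1)/√3)] for Σ > 0. Then for every Σ > 0, (K₃′(Σ))²·(K₃′(Σ) + Σ·K₃″(Σ)) = 1. -/
/-!
With `u = (Σ³ + 1)^{1/3}` the potential is `K₃ = π/(2√3) + Φ(u)/6`, and the logarithmic and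
arctangent terms of `Φ` are the partial fractions of `6/(u³ - 1)`, so `Φ'(u) = 6u³/(u³ - 1)`.
Since `u³ - 1 = Σ³` and `u' = Σ²/u²`, this gives `K₃′ = u/Σ`; hence `K₃′ + Σ K₃″ = (Σ K₃′)′ = u′`
and `K₃′² (K₃′ + Σ K₃″) = (u/Σ)² · Σ²/u² = 1`.
-/

/-- The Kähler potential of the Ricci-flat Kähler metric on `O_{P²}(-3)`, as a function of
the invariant `Σ = |z₁|² + |z₂|² + |z₃|²`. -/
noncomputable def K₃ (S : ℝ) : ℝ :=
  Real.pi / (2 * Real.sqrt 3) + (1 / 6) *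
    (6 * (S ^ 3 + 1) ^ ((1 : ℝ) / 3)
      + 2 * Real.log ((S ^ 3 + 1) ^ ((1 : ℝ) / 3) - 1)
      - Real.log ((S ^ 3 + 1) ^ ((2 : ℝ) / 3) + (S ^ 3 + 1) ^ ((1 : ℝ) / 3) + 1)
      - 2 * Real.sqrt 3 *
          Real.arctan ((2 * (S ^ 3 + 1) ^ ((1 : ℝ) / 3) + 1) / Real.sqrt 3))


open Real Filter Topology

lemma rpow_one_third_pow_three {x : ℝ} (hx : 0 ≤ x) : (x ^ ((1 : ℝ) / 3)) ^ 3 = x := by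
  simpa using Real.rpow_inv_natCast_pow hx three_ne_zero

lemma rpow_two_thirds {x : ℝ} (hx : 0 ≤ x) : x ^ ((2 : ℝ) / 3) = (x ^ ((1 : ℝ) / 3)) ^ 2 := by
  rw [← Real.rpow_natCast, ← Real.rpow_mul hx]
  norm_num

lemma HasDerivAt.rpow_one_third {f : ℝ → ℝ} {f' x : ℝ} (hf : HasDerivAt f f' x) (hx : 0 < f x) :
    HasDerivAt (fun y => f y ^ ((1 : ℝ) / 3)) (f' / (3 * (f x ^ ((1 : ℝ) / 3)) ^ 2)) x := by
  have hu : 0 < f x ^ ((1 : ℝ) / 3) := by positivity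
  convert hf.rpow_const (p := 1 / 3) (Or.inl hx.ne') using 1
  rw [Real.rpow_sub hx, Real.rpow_one]
  nth_rewrite 3 [← rpow_one_third_pow_three hx.le]
  field_simp

noncomputable def potentialOfCubeRoot (u : ℝ) : ℝ :=
  6 * u + 2 * log (u - 1) - log (u ^ 2 + u + 1) - 2 * √3 * arctan ((2 * u + 1) / √3)

lemma K₃_eq_potentialOfCubeRoot {S : ℝ} (hS : 0 ≤ S ^ 3 + 1) :
    K₃ S = π / (2 * √3) + potentialOfCubeRoot ((S ^ 3 + 1) ^ ((1 : ℝ) / 3)) / 6 := by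
  rw [K₃, potentialOfCubeRoot, rpow_two_thirds hS]
  ring

lemma hasDerivAt_potentialOfCubeRoot {u : ℝ} (hu : u ≠ 1) :
    HasDerivAt potentialOfCubeRoot (6 * u ^ 3 / (u ^ 3 - 1)) u := by
  have hu₁ : u - 1 ≠ 0 := sub_ne_zero.mpr hu
  have hq : u ^ 2 + u + 1 ≠ 0 := by nlinarith [sq_nonneg (2 * u + 1)]
  have hq' : u * (u + 1) + 1 ≠ 0 := by nlinarith [sq_nonneg (2 * u + 1)]
  have hs : √3 ^ 2 = 3 := Real.sq_sqrt (by norm_num)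
  have hlin := hasDerivAt_id' u
  have hquad : HasDerivAt (fun v : ℝ => v ^ 2 + v + 1) (2 * u + 1) u := by
    simpa using ((hasDerivAt_pow 2 u).add hlin).add_const 1
  have h := ((((hlin.const_mul 6).add ((hlin.sub_const 1).log hu₁ |>.const_mul 2)).sub
    (hquad.log hq)).sub
    ((((hlin.const_mul 2).add_const 1).div_const √3).arctan.const_mul (2 * √3)))
  refine h.congr_deriv ?_
  have hcube : u ^ 3 - 1 = (u - 1) * (u ^ 2 + u + 1) := by ring
  have hden : 1 + ((2 * u + 1) / √3) ^ 2 = 4 * (u ^ 2 + u + 1) / 3 := by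
    rw [div_pow, hs]
    ring
  rw [hcube, hden]
  field_simp
  ring

lemma hasDerivAt_cubeRoot_cube_add_one {S : ℝ} (hS : 0 < S ^ 3 + 1) :
    HasDerivAt (fun x : ℝ => (x ^ 3 + 1) ^ ((1 : ℝ) / 3))
      (S ^ 2 / ((S ^ 3 + 1) ^ ((1 : ℝ) / 3)) ^ 2) S := by
  have hcube : HasDerivAt (fun x : ℝ => x ^ 3 + 1) (3 * S ^ 2) S := by
    simpa using (hasDerivAt_pow 3 S).add_const 1
  convert hcube.rpow_one_third hS using 1
  field_simp

lemma eventually_cube_add_one_pos {S : ℝ} (hS : 0 < S ^ 3 + 1) :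
    ∀ᶠ x in 𝓝 S, 0 < x ^ 3 + 1 :=
  ((continuous_pow 3).add continuous_const).continuousAt.eventually (eventually_gt_nhds hS)

lemma hasDerivAt_K₃ {S : ℝ} (hS₀ : S ≠ 0) (hS : 0 < S ^ 3 + 1) :
    HasDerivAt K₃ ((S ^ 3 + 1) ^ ((1 : ℝ) / 3) / S) S := by
  set u := (S ^ 3 + 1) ^ ((1 : ℝ) / 3) with hu
  have hu₀ : 0 < u := by positivity
  have hu₃ : u ^ 3 = S ^ 3 + 1 := rpow_one_third_pow_three hS.le
  have hu₁ : u ≠ 1 := by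
    intro h
    rw [h] at hu₃
    exact pow_ne_zero 3 hS₀ (by linarith)
  have hK : K₃ =ᶠ[𝓝 S]
      fun x => π / (2 * √3) + potentialOfCubeRoot ((x ^ 3 + 1) ^ ((1 : ℝ) / 3)) / 6 := by
    filter_upwards [eventually_cube_add_one_pos hS] with x hx
    exact K₃_eq_potentialOfCubeRoot hx.le
  have h := (((hasDerivAt_potentialOfCubeRoot hu₁).comp S
    (hasDerivAt_cubeRoot_cube_add_one hS)).div_const 6).const_add (π / (2 * √3))
  refine (h.congr_of_eventuallyEq hK).congr_deriv ?_
  rw [← hu, hu₃, add_sub_cancel_right]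
  field_simp
  linear_combination -hu₃

lemma deriv_K₃_add_mul_deriv_deriv_K₃ {S : ℝ} (hS₀ : S ≠ 0) (hS : 0 < S ^ 3 + 1) :
    deriv K₃ S + S * deriv (deriv K₃) S = S ^ 2 / ((S ^ 3 + 1) ^ ((1 : ℝ) / 3)) ^ 2 := by
  have hK' : deriv K₃ =ᶠ[𝓝 S] fun x => (x ^ 3 + 1) ^ ((1 : ℝ) / 3) / x := by
    filter_upwards [eventually_ne_nhds hS₀, eventually_cube_add_one_pos hS] with x hx₀ hx
    exact (hasDerivAt_K₃ hx₀ hx).deriv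
  have hK'' := ((hasDerivAt_cubeRoot_cube_add_one hS).div (hasDerivAt_id' S) hS₀)
    |>.congr_of_eventuallyEq hK'
  rw [(hasDerivAt_K₃ hS₀ hS).deriv, hK''.deriv]
  field_simp
  ring

/-- For every `Σ > 0`, `(K₃′(Σ))²·(K₃′(Σ) + Σ·K₃″(Σ)) = 1`
(the Monge–Ampère equation expressing Ricci-flatness of the metric on `O_{P²}(-3)`). -/
theorem stmt_3 :
    ∀ S : ℝ, 0 < S →
      (deriv K₃ S) ^ 2 * (deriv K₃ S + S * deriv (deriv K₃) S) = 1 := by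
  intro S hS
  have hS₃ : 0 < S ^ 3 + 1 := by positivity
  have hu : 0 < (S ^ 3 + 1) ^ ((1 : ℝ) / 3) := by positivity
  rw [deriv_K₃_add_mul_deriv_deriv_K₃ hS.ne' hS₃, (hasDerivAt_K₃ hS.ne' hS₃).deriv]
  field_simp
end

section
/- Let κ, λ ∈ ℝ and C(r) = κ + λ·( log|1 − (r+1)^{1/3}| − (1/2)·log((r+1)^{2/3} + (r+1)^{1/3} + 1) − √3·arctan((2·(r+1)^{1/3} + 1)/√3) ). Then for every r > 0, 3·r·(r+1)·C″(r) + (5r+3)·C′(r) = 0. -/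
/-!
With `u = (r + 1) ^ (1 / 3)` the function is `C = κ + λ F(u)`, and partial fractions
`3 / (u³ - 1) = 1 / (u - 1) - (u + 2) / (u² + u + 1)` show `F' (u) = 3 / (u³ - 1)`.
Since `u' = u / (3 u³)` and `u³ - 1 = r`, this gives `C' (r) = λ (r + 1) ^ (-2/3) / r`,
and this `g = C'` solves the first-order equation `3 r (r + 1) g' + (5 r + 3) g = 0`.
-/

open Real Filter Topology

noncomputable def cubePrimitive (u : ℝ) : ℝ :=
  log (1 - u) - 1 / 2 * log (u ^ 2 + u + 1) - √3 * arctan ((2 * u + 1) / √3)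

theorem hasDerivAt_cubePrimitive {u : ℝ} (hu : u ≠ 1) :
    HasDerivAt cubePrimitive (3 / (u ^ 3 - 1)) u := by
  have h1u : 1 - u ≠ 0 := sub_ne_zero.2 hu.symm
  have hq : u ^ 2 + u + 1 ≠ 0 := by nlinarith [sq_nonneg (u + 1 / 2)]
  have hs : √3 ≠ 0 := by positivity
  have hid := hasDerivAt_id' u
  have hlog₁ := ((hasDerivAt_const u (1 : ℝ)).sub hid).log h1u
  have hlog₂ := (((hid.pow 2).add hid).add_const 1).log hq
  have harctan := (((hid.const_mul 2).add_const 1).div_const √3).arctan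
  refine ((hlog₁.sub (hlog₂.const_mul (1 / 2))).sub (harctan.const_mul √3)).congr_deriv ?_
  have harg : 1 + ((2 * u + 1) / √3) ^ 2 = 4 * (u ^ 2 + u + 1) / 3 := by
    rw [div_pow, sq_sqrt zero_le_three]; ring
  simp only [Pi.sub_apply, Pi.add_apply, Pi.pow_apply, harg, Nat.cast_ofNat,
    Nat.add_one_sub_one, pow_one, mul_one]
  rw [show u ^ 3 - 1 = -(1 - u) * (u ^ 2 + u + 1) by ring]
  -- `field_simp` would put `u ^ 2 + u + 1` in Horner form and lose `hq`
  generalize hq_def : u ^ 2 + u + 1 = q at hq ⊢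
  field_simp
  subst hq_def
  ring

theorem hasDerivAt_cubePrimitive_rpow_one_third {r : ℝ} (hr : -1 < r) (hr0 : r ≠ 0) :
    HasDerivAt (fun s ↦ cubePrimitive ((s + 1) ^ ((1 : ℝ) / 3)))
      ((r + 1) ^ (-(2 : ℝ) / 3) / r) r := by
  have hr1 : 0 < r + 1 := by linarith
  have hcube : ((r + 1) ^ ((1 : ℝ) / 3)) ^ 3 = r + 1 := by
    rw [← rpow_natCast, ← rpow_mul hr1.le]; norm_num
  have hu : (r + 1) ^ ((1 : ℝ) / 3) ≠ 1 := by
    intro h; rw [h] at hcube; apply hr0; linarith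
  refine ((hasDerivAt_cubePrimitive hu).comp r
    (((hasDerivAt_id' r).add_const 1).rpow_const (p := 1 / 3) (Or.inl hr1.ne'))).congr_deriv ?_
  rw [hcube, add_sub_cancel_right, show (1 : ℝ) / 3 - 1 = -(2 : ℝ) / 3 by norm_num]
  field_simp

theorem radial_ode_rpow_neg_two_thirds_div {c r : ℝ} (hr : -1 < r) (hr0 : r ≠ 0) :
    3 * r * (r + 1) * deriv (fun s ↦ c * ((s + 1) ^ (-(2 : ℝ) / 3) / s)) r
      + (5 * r + 3) * (c * ((r + 1) ^ (-(2 : ℝ) / 3) / r)) = 0 := by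
  have hr1 : 0 < r + 1 := by linarith
  have H : HasDerivAt (fun s ↦ c * ((s + 1) ^ (-(2 : ℝ) / 3) / s)) _ r :=
    ((((hasDerivAt_id' r).add_const 1).rpow_const (Or.inl hr1.ne')).div
      (hasDerivAt_id' r) hr0).const_mul c
  rw [H.deriv, show -(2 : ℝ) / 3 - 1 = -(2 : ℝ) / 3 + (-1) by norm_num, rpow_add hr1, rpow_neg_one]
  field_simp
  ring

/-- Let `κ, λ ∈ ℝ` and
`C r = κ + λ·(log|1 − (r+1)^{1/3}| − (1/2)·log((r+1)^{2/3} + (r+1)^{1/3} + 1)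
        − √3·arctan((2(r+1)^{1/3} + 1)/√3))`.
Then for every `r > 0`, `3·r·(r+1)·C″(r) + (5r+3)·C′(r) = 0`
(the radial reduction of the Laplace–Beltrami equation on `O_{P²}(-3)`). -/
theorem stmt_6 (κ lam : ℝ) (C : ℝ → ℝ)
    (hC : ∀ r : ℝ, C r = κ + lam *
      (Real.log (1 - (r + 1) ^ ((1 : ℝ) / 3))
        - (1 / 2) * Real.log ((r + 1) ^ ((2 : ℝ) / 3) + (r + 1) ^ ((1 : ℝ) / 3) + 1)
        - Real.sqrt 3 * Real.arctan ((2 * (r + 1) ^ ((1 : ℝ) / 3) + 1) / Real.sqrt 3))) :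
    ∀ r : ℝ, 0 < r →
      3 * r * (r + 1) * deriv (deriv C) r + (5 * r + 3) * deriv C r = 0 := by
  have hC' : ∀ s > -1, C s = κ + lam * cubePrimitive ((s + 1) ^ ((1 : ℝ) / 3)) := by
    intro s hs
    rw [hC, cubePrimitive, ← rpow_mul_natCast (by linarith : (0 : ℝ) ≤ s + 1)]
    norm_num
  have hderiv : ∀ s > 0, deriv C s = lam * ((s + 1) ^ (-(2 : ℝ) / 3) / s) := by
    intro s hs
    rw [EventuallyEq.deriv_eq (eventually_gt_nhds (by linarith : -1 < s) |>.mono hC')]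
    exact ((hasDerivAt_cubePrimitive_rpow_one_third (by linarith) hs.ne').const_mul lam
      |>.const_add κ).deriv
  intro r hr
  have hderiv_near : deriv C =ᶠ[𝓝 r] fun s ↦ lam * ((s + 1) ^ (-(2 : ℝ) / 3) / s) :=
    eventually_gt_nhds hr |>.mono hderiv
  rw [hderiv_near.deriv_eq, hderiv r hr]
  exact radial_ode_rpow_neg_two_thirds_div (by linarith) hr.ne'
end

section
/- Let s ≤ −3, −3/2 ≤ t < 0 and ρ > 0. Define 𝔲 = s·t·ρ²/(2·(1+ρ²)), 𝔳 = s·t/4 and 𝔴 = (−3t − s·(3+t))/6. Then: (i) ρ = √(𝔲/(2𝔳 − 𝔲)); (ii) t = (1/6)·(−4𝔳 − 6𝔴 + √((4𝔳 + 6𝔴)² − 144𝔳)); (iii) s = (1/3)·(−2𝔳 − 3𝔴 − √(4·(𝔳 − 9)·𝔳 + 12·𝔳·𝔴 + 9·𝔴²)). -/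
/-- Let `s ≤ −3`, `−3/2 ≤ t < 0` and `ρ > 0`.  Define the moment-map
(AMSY symplectic) coordinates `𝔲 = s·t·ρ²/(2(1+ρ²))`, `𝔳 = s·t/4`,
`𝔴 = (−3t − s(3+t))/6`.  Then
(i)   `ρ = √(𝔲/(2𝔳 − 𝔲))`;
(ii)  `t = (1/6)(−4𝔳 − 6𝔴 + √((4𝔳 + 6𝔴)² − 144𝔳))`;
(iii) `s = (1/3)(−2𝔳 − 3𝔴 − √(4(𝔳 − 9)𝔳 + 12𝔳𝔴 + 9𝔴²))`. -/
theorem stmt_7 (s t ρ u v w : ℝ)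
    (hs : s ≤ -3) (ht₁ : -3 / 2 ≤ t) (ht₂ : t < 0) (hρ : 0 < ρ)
    (hu : u = s * t * ρ ^ 2 / (2 * (1 + ρ ^ 2)))
    (hv : v = s * t / 4)
    (hw : w = (-3 * t - s * (3 + t)) / 6) :
    ρ = Real.sqrt (u / (2 * v - u)) ∧
    t = (1 / 6) * (-4 * v - 6 * w + Real.sqrt ((4 * v + 6 * w) ^ 2 - 144 * v)) ∧
    s = (1 / 3) * (-2 * v - 3 * w
          - Real.sqrt (4 * (v - 9) * v + 12 * v * w + 9 * w ^ 2)) := by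
  have hslt : s < 0 := by linarith
  have hst : 0 < s * t := mul_pos_of_neg_of_neg hslt ht₂
  have hden : (0:ℝ) < 2 * (1 + ρ ^ 2) := by positivity
  have hts : 0 ≤ t - s := by linarith
  refine ⟨?_, ?_, ?_⟩
  · have h1 : u / (2 * v - u) = ρ ^ 2 := by
      rw [hu, hv]
      rw [div_eq_iff]
      · field_simp
        ring
      · have : s * t / 2 - s * t * ρ ^ 2 / (2 * (1 + ρ ^ 2)) = s * t / (2 * (1 + ρ ^ 2)) := by
          field_simp; ring
        rw [hu] at *
        intro h
        have : s * t / (2 * (1 + ρ ^ 2)) = 0 := by linarith [this, h]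
        have := (div_eq_zero_iff.mp this)
        rcases this with h' | h'
        · exact absurd h' (ne_of_gt hst)
        · linarith
    rw [h1, Real.sqrt_sq hρ.le]
  · have h2 : (4 * v + 6 * w) ^ 2 - 144 * v = (3 * (t - s)) ^ 2 := by
      rw [hv, hw]; ring
    rw [h2, Real.sqrt_sq (by linarith), hv, hw]; ring
  · have h3 : 4 * (v - 9) * v + 12 * v * w + 9 * w ^ 2 = (3 / 2 * (t - s)) ^ 2 := by
      rw [hv, hw]; ring
    rw [h3, Real.sqrt_sq (by linarith), hv, hw]; ring
end

section
/- For every ϖ > 0, set S = √(ϖ·(ϖ+8)) and t = −3·ϖ²·(ϖ + S + 8)/(S·(ϖ + S)²). Then ϖ = 8·t²/(3·(2t+3)). -/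
/-! The relation `S² = ϖ(ϖ + 8)` gives `ϖ(ϖ + S + 8) = S(ϖ + S)`, so the coordinate collapses to
`t = −3ϖ/(ϖ + S)`. Then `2t + 3 = 3(S − ϖ)/(ϖ + S)`, and since `(S − ϖ)(S + ϖ) = 8ϖ` the quotient
`8t²/(3(2t + 3))` equals `8ϖ²/(8ϖ) = ϖ`. -/

lemma orthotoric_coord_eq_of_sq_eq {w s : ℝ} (hs : s ^ 2 = w * (w + 8)) (hs0 : s ≠ 0)
    (hws : w + s ≠ 0) :
    -3 * w ^ 2 * (w + s + 8) / (s * (w + s) ^ 2) = -3 * w / (w + s) := by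
  rw [div_eq_div_iff (by positivity) hws]
  linear_combination 3 * w * (w + s) * hs

lemma eight_mul_sq_div_of_sq_eq {w s : ℝ} (hs : s ^ 2 = w * (w + 8)) (hw : w ≠ 0)
    (hws : w + s ≠ 0) :
    8 * (-3 * w / (w + s)) ^ 2 / (3 * (2 * (-3 * w / (w + s)) + 3)) = w := by
  have hdiff : s - w ≠ 0 := by
    intro h
    have : 8 * w = 0 := by linear_combination (s + w) * h - hs
    exact hw (by linarith)
  have hden : 2 * (-3 * w / (w + s)) + 3 = 3 * (s - w) / (w + s) := by
    field_simp
    ring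
  rw [hden]
  field_simp
  linear_combination -hs

/-- For every `ϖ > 0`, with `S = √(ϖ(ϖ+8))` and
`t = −3ϖ²(ϖ + S + 8)/(S(ϖ + S)²)`, one has `ϖ = 8t²/(3(2t+3))`
(the explicit inversion of the orthotoric coordinate `t(ϖ)` on the exceptional divisor
`WP[112]`). -/
theorem stmt_14 :
    ∀ ϖ : ℝ, 0 < ϖ →
      ϖ = 8 * (-3 * ϖ ^ 2 * (ϖ + Real.sqrt (ϖ * (ϖ + 8)) + 8) /
            (Real.sqrt (ϖ * (ϖ + 8)) * (ϖ + Real.sqrt (ϖ * (ϖ + 8))) ^ 2)) ^ 2 /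
          (3 * (2 * (-3 * ϖ ^ 2 * (ϖ + Real.sqrt (ϖ * (ϖ + 8)) + 8) /
            (Real.sqrt (ϖ * (ϖ + 8)) * (ϖ + Real.sqrt (ϖ * (ϖ + 8))) ^ 2)) + 3)) := by
  intro w hw
  have hprod : 0 < w * (w + 8) := by positivity
  have hs0 : 0 < Real.sqrt (w * (w + 8)) := Real.sqrt_pos.mpr hprod
  have hs : Real.sqrt (w * (w + 8)) ^ 2 = w * (w + 8) := Real.sq_sqrt hprod.le
  have hws : w + Real.sqrt (w * (w + 8)) ≠ 0 := by positivity
  rw [orthotoric_coord_eq_of_sq_eq hs hs0.ne' hws]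
  exact (eight_mul_sq_div_of_sq_eq hs hw.ne' hws).symm
end

section
/- Let 0 < α < 1 and define U(t) = 864·(α+1)·(α+2)·(3α² + 8·(3α+4)·t)/(9α² + 144·α·t + 64·t·(t+3))² − 3·(3α+4)/(8t). Then U(−3α/8) − U(−(3/8)·(3α+4)) = 2. -/
/-- Let `0 < α < 1` and define
`U t = 864(α+1)(α+2)(3α² + 8(3α+4)t)/(9α² + 144αt + 64t(t+3))² − 3(3α+4)/(8t)`.
Then `U(−3α/8) − U(−(3/8)(3α+4)) = 2` (the period `∫_{C₂} Ric = 2`). -/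
theorem stmt_15 (α : ℝ) (hα₀ : 0 < α) (hα₁ : α < 1)
    (U : ℝ → ℝ)
    (hU : ∀ t : ℝ, U t =
      864 * (α + 1) * (α + 2) * (3 * α ^ 2 + 8 * (3 * α + 4) * t) /
          (9 * α ^ 2 + 144 * α * t + 64 * t * (t + 3)) ^ 2
        - 3 * (3 * α + 4) / (8 * t)) :
    U (-3 * α / 8) - U (-(3 / 8) * (3 * α + 4)) = 2 := by
  have h1 : α ≠ 0 := ne_of_gt hα₀
  have h2 : α + 1 ≠ 0 := by nlinarith
  have h3 : α + 2 ≠ 0 := by nlinarith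
  have h4 : 3 * α + 4 ≠ 0 := by nlinarith
  have d1 : (9 * α ^ 2 + 144 * α * (-3 * α / 8) + 64 * (-3 * α / 8) * (-3 * α / 8 + 3))
      = -36 * α * (α + 2) := by ring
  have d2 : (9 * α ^ 2 + 144 * α * (-(3 / 8) * (3 * α + 4)) +
      64 * (-(3 / 8) * (3 * α + 4)) * (-(3 / 8) * (3 * α + 4) + 3))
      = -72 * (α + 1) * (α + 2) := by ring
  rw [hU, hU, d1, d2]
  have hd1 : (-36 * α * (α + 2)) ≠ 0 := by positivity
  have hd2 : (-72 * (α + 1) * (α + 2)) ≠ 0 := by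
    intro h; apply h2; nlinarith [mul_ne_zero (mul_ne_zero (by norm_num : (-72:ℝ) ≠ 0) h2) h3 h]
  field_simp
  ring
end

section
/- For every t with −3/2 < t < 0, the function G(t) = −(3/4)·(t+3)/(t·(2t+3)) satisfies 8·(t+1)·G(t)/(t+3) − G′(t)/G(t) + (2t+3)/(t² + 3t) = 0. -/
/-- `Π″` for the Kronheimer metric on `WP[112]`, as a function of the orthotoric coordinate `t`. -/
noncomputable def kronheimerHessian (t : ℝ) : ℝ :=
  -(3 / 4) * (t + 3) / (t * (2 * t + 3))

lemma hasDerivAt_kronheimerHessian {t : ℝ} (ht : t ≠ 0) (ht' : 2 * t + 3 ≠ 0) :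
    HasDerivAt kronheimerHessian
      (3 / 4 * (2 * t ^ 2 + 12 * t + 9) / (t * (2 * t + 3)) ^ 2) t := by
  have hden : t * (2 * t + 3) ≠ 0 := mul_ne_zero ht ht'
  have hquot := ((hasDerivAt_id' t).add_const 3 |>.const_mul (-(3 / 4))).fun_div
    ((hasDerivAt_id' t).fun_mul ((hasDerivAt_id' t).const_mul 2 |>.add_const 3)) hden
  exact hquot.congr_deriv (by ring)

lemma deriv_div_kronheimerHessian {t : ℝ} (ht : t ≠ 0) (ht' : 2 * t + 3 ≠ 0) (ht'' : t + 3 ≠ 0) :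
    deriv kronheimerHessian t / kronheimerHessian t
      = -(2 * t ^ 2 + 12 * t + 9) / (t * (t + 3) * (2 * t + 3)) := by
  rw [(hasDerivAt_kronheimerHessian ht ht').deriv, kronheimerHessian]
  field_simp

theorem kronheimerHessian_ode {t : ℝ} (ht : t ≠ 0) (ht' : 2 * t + 3 ≠ 0) (ht'' : t + 3 ≠ 0) :
    8 * (t + 1) * kronheimerHessian t / (t + 3) - deriv kronheimerHessian t / kronheimerHessian t
      + (2 * t + 3) / (t ^ 2 + 3 * t) = 0 := by
  have hquad : t ^ 2 + 3 * t = t * (t + 3) := by ring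
  rw [deriv_div_kronheimerHessian ht ht' ht'', hquad, kronheimerHessian]
  field_simp
  ring

/-- For every `t` with `−3/2 < t < 0`, the function
`G t = −(3/4)(t+3)/(t(2t+3))` satisfies the ordinary differential equation
`8(t+1)G(t)/(t+3) − G′(t)/G(t) + (2t+3)/(t² + 3t) = 0`
(the `t`-equation of the hybrid Monge–Ampère equation, with `G = Π″` the second
derivative of the symplectic potential of the Kronheimer metric on `WP[112]`). -/
theorem stmt_16 (G : ℝ → ℝ)
    (hG : ∀ t : ℝ, G t = -(3 / 4) * (t + 3) / (t * (2 * t + 3))) :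
    ∀ t : ℝ, -3 / 2 < t → t < 0 →
      8 * (t + 1) * G t / (t + 3) - deriv G t / G t + (2 * t + 3) / (t ^ 2 + 3 * t)
        = 0 := by
  intro t hlow hneg
  obtain rfl : G = kronheimerHessian := funext hG
  exact kronheimerHessian_ode hneg.ne (by linarith) (by linarith)
end

section
/- Let I, J ⊆ ℝ be open intervals with −3 ∉ I and −3 ∉ J, let Π : I → ℝ be twice differentiable, let Y₁, Y₂ : J → ℝ be differentiable, and let κ₁ ∈ ℝ. Suppose 𝒬 : I → ℝ is differentiable and satisfies 𝒬′(t) = (𝒬(t) − κ₁)/(t+3) + ((2t+3)·Π′(t) − 2·Π(t))/(3·(t+3)) for all t ∈ I, and 𝒫 : J → ℝ is differentiable with 𝒫′(s) = −κ₁ − s²·Y₁′(s) − 2s·Y₂′(s) + (s+3)/16 for all s ∈ J. Define Γ(t,s) = −(1/3)·(2s+3)·Π(t) + 𝒫(s) + (s+3)·(𝒬(t) − (1/16)·(t+3)·log|s+3|) + s·t·Y₁(s) + (s+t)·Y₂(s). Then for all (t,s) ∈ I × J: (i) ∂Γ/∂s − ∂Γ/∂t + (s−t)·∂²Γ/∂s∂t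 = 0, and (ii) ∂²Γ/∂t² = (t−s)·Π″(t)/(t+3). -/
/-!
Regrouping the terms of `Γ` by their affine dependence on the other variable puts it in the form
`Γ(t,s) = s·A(t) + B(t) + t·C(s) + E(s)`. For such a potential the orthotoric expression
`∂ₛΓ − ∂ₜΓ + (s−t)∂²ₛₜΓ` separates as `(A − t A′ − B′)(t) + (E′ + s C′ − C)(s)`, and here the two
ODEs make the `t`-part equal to `κ₁` and the `s`-part equal to `−κ₁`. Likewise `∂²ₜΓ = s A″ + B″`,
and differentiating the ODE for `Q` gives `(t+3) Q″ = (2t+3) Π″ / 3`, which yields (ii).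
-/

open Filter Topology

section AffinePotential

variable {Γ : ℝ → ℝ → ℝ} {A B C E : ℝ → ℝ}

theorem hasDerivAt_fst_of_affine {a b t : ℝ} (hA : HasDerivAt A a t) (hB : HasDerivAt B b t)
    (hΓ : ∀ t s, Γ t s = s * A t + B t + t * C s + E s) (s : ℝ) :
    HasDerivAt (fun t' => Γ t' s) (s * a + b + C s) t := by
  simp only [hΓ]
  exact ((((hA.const_mul s).add hB).add ((hasDerivAt_id' t).mul_const (C s))).add_const
    (E s)).congr_deriv (by ring)

theorem hasDerivAt_snd_of_affine {c e s : ℝ} (hC : HasDerivAt C c s) (hE : HasDerivAt E e s)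
    (hΓ : ∀ t s, Γ t s = s * A t + B t + t * C s + E s) (t : ℝ) :
    HasDerivAt (fun s' => Γ t s') (A t + t * c + e) s := by
  simp only [hΓ]
  exact (((((hasDerivAt_id' s).mul_const (A t)).add_const (B t)).add (hC.const_mul t)).add
    hE).congr_deriv (by ring)

theorem orthotoric_eq_of_affine {a b c e t s : ℝ} (hA : HasDerivAt A a t) (hB : HasDerivAt B b t)
    (hC : HasDerivAt C c s) (hE : HasDerivAt E e s)
    (hΓ : ∀ t s, Γ t s = s * A t + B t + t * C s + E s) :
    deriv (fun s' => Γ t s') s - deriv (fun t' => Γ t' s) t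
        + (s - t) * deriv (fun s' => deriv (fun t' => Γ t' s') t) s
      = (A t - t * a - b) + (e + s * c - C s) := by
  have hmixed : (fun s' => deriv (fun t' => Γ t' s') t) = fun s' => s' * a + b + C s' :=
    funext fun s' => (hasDerivAt_fst_of_affine hA hB hΓ s').deriv
  have hmixed' : HasDerivAt (fun s' => s' * a + b + C s') (a + c) s :=
    ((((hasDerivAt_id' s).mul_const a).add_const b).add hC).congr_deriv (by ring)
  rw [(hasDerivAt_snd_of_affine hC hE hΓ t).deriv, (hasDerivAt_fst_of_affine hA hB hΓ s).deriv,
    hmixed, hmixed'.deriv]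
  ring

theorem hasDerivAt_deriv_fst_of_affine {A' B' : ℝ → ℝ} {a' b' t : ℝ}
    (hA : ∀ᶠ τ in 𝓝 t, HasDerivAt A (A' τ) τ) (hB : ∀ᶠ τ in 𝓝 t, HasDerivAt B (B' τ) τ)
    (hA' : HasDerivAt A' a' t) (hB' : HasDerivAt B' b' t)
    (hΓ : ∀ t s, Γ t s = s * A t + B t + t * C s + E s) (s : ℝ) :
    HasDerivAt (fun t' => deriv (fun t'' => Γ t'' s) t') (s * a' + b') t :=
  (((hA'.const_mul s).add hB').add_const (C s)).congr_of_eventuallyEq <|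
    (hA.and hB).mono fun _ h => (hasDerivAt_fst_of_affine h.1 h.2 hΓ s).deriv

end AffinePotential

theorem hasDerivAt_add_mul_log_add {x c : ℝ} (hx : x + c ≠ 0) :
    HasDerivAt (fun y => (y + c) * Real.log (y + c)) (Real.log (x + c) + 1) x :=
  (Real.hasDerivAt_mul_log hx).comp_add_const x c

theorem hasDerivAt_deriv_of_ode {P Q : ℝ → ℝ} {κ t p'' : ℝ} (ht : t + 3 ≠ 0)
    (hP : DifferentiableAt ℝ P t) (hP' : HasDerivAt (deriv P) p'' t)
    (hQ : DifferentiableAt ℝ Q t)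
    (hQ' : ∀ᶠ τ in 𝓝 t, deriv Q τ = (Q τ - κ) / (τ + 3)
        + ((2 * τ + 3) * deriv P τ - 2 * P τ) / (3 * (τ + 3))) :
    HasDerivAt (deriv Q) ((2 * t + 3) * p'' / (3 * (t + 3))) t := by
  have hlin : HasDerivAt (fun τ : ℝ => τ + 3) 1 t := (hasDerivAt_id' t).add_const 3
  have hnum : HasDerivAt (fun τ => (2 * τ + 3) * deriv P τ - 2 * P τ)
      ((2 * t + 3) * p'') t :=
    (((((hasDerivAt_id' t).const_mul 2).add_const 3).mul hP').sub
      (hP.hasDerivAt.const_mul 2)).congr_deriv (by ring)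
  have hrhs : HasDerivAt (fun τ => (Q τ - κ) / (τ + 3)
      + ((2 * τ + 3) * deriv P τ - 2 * P τ) / (3 * (τ + 3))) _ t :=
    ((hQ.hasDerivAt.sub_const κ).div hlin ht).add
      (hnum.div (hlin.const_mul 3) (mul_ne_zero three_ne_zero ht))
  refine (hrhs.congr_of_eventuallyEq hQ').congr_deriv ?_
  rw [hQ'.self_of_nhds]
  field_simp
  ring

theorem stmt_17_general (I J : Set ℝ)
    (hI : ∃ a b : ℝ, I = Set.Ioo a b)
    (hI3 : (-3 : ℝ) ∉ I) (hJ3 : (-3 : ℝ) ∉ J)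
    (Pfun Y₁ Y₂ Q Pc : ℝ → ℝ) (κ₁ : ℝ)
    (hP₁ : ∀ t ∈ I, DifferentiableAt ℝ Pfun t)
    (hP₂ : ∀ t ∈ I, DifferentiableAt ℝ (deriv Pfun) t)
    (hY₁ : ∀ s ∈ J, DifferentiableAt ℝ Y₁ s)
    (hY₂ : ∀ s ∈ J, DifferentiableAt ℝ Y₂ s)
    (hQ : ∀ t ∈ I, DifferentiableAt ℝ Q t)
    (hQ' : ∀ t ∈ I, deriv Q t = (Q t - κ₁) / (t + 3)
        + ((2 * t + 3) * deriv Pfun t - 2 * Pfun t) / (3 * (t + 3)))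
    (hPc : ∀ s ∈ J, DifferentiableAt ℝ Pc s)
    (hPc' : ∀ s ∈ J, deriv Pc s =
        -κ₁ - s ^ 2 * deriv Y₁ s - 2 * s * deriv Y₂ s + (s + 3) / 16)
    (Γ : ℝ → ℝ → ℝ)
    (hΓ : ∀ t s : ℝ, Γ t s =
      -(1 / 3) * (2 * s + 3) * Pfun t + Pc s
        + (s + 3) * (Q t - (1 / 16) * (t + 3) * Real.log (s + 3))
        + s * t * Y₁ s + (s + t) * Y₂ s) :
    ∀ t ∈ I, ∀ s ∈ J,
      (deriv (fun s' => Γ t s') s - deriv (fun t' => Γ t' s) t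
          + (s - t) * deriv (fun s' => deriv (fun t' => Γ t' s') t) s = 0) ∧
      deriv (fun t' => deriv (fun t'' => Γ t'' s) t') t =
        (t - s) * deriv (deriv Pfun) t / (t + 3) := by
  intro t ht s hs
  have ht3 : t + 3 ≠ 0 := fun h => hI3 (by rwa [← eq_neg_of_add_eq_zero_left h])
  have hs3 : s + 3 ≠ 0 := fun h => hJ3 (by rwa [← eq_neg_of_add_eq_zero_left h])
  have hIt : I ∈ 𝓝 t := by obtain ⟨a, b, rfl⟩ := hI; exact isOpen_Ioo.mem_nhds ht
  have hΓ' : ∀ t s, Γ t s = s * (Q t - 2 / 3 * Pfun t) + (3 * Q t - Pfun t)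
      + t * (-(1 / 16) * ((s + 3) * Real.log (s + 3)) + s * Y₁ s + Y₂ s)
      + (Pc s - 3 / 16 * ((s + 3) * Real.log (s + 3)) + s * Y₂ s) := fun t s => by
    rw [hΓ]; ring
  have hA : ∀ᶠ τ in 𝓝 t, HasDerivAt (fun τ => Q τ - 2 / 3 * Pfun τ)
      (deriv Q τ - 2 / 3 * deriv Pfun τ) τ := eventually_of_mem hIt fun τ hτ =>
    (hQ τ hτ).hasDerivAt.sub ((hP₁ τ hτ).hasDerivAt.const_mul _)
  have hB : ∀ᶠ τ in 𝓝 t, HasDerivAt (fun τ => 3 * Q τ - Pfun τ)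
      (3 * deriv Q τ - deriv Pfun τ) τ := eventually_of_mem hIt fun τ hτ =>
    ((hQ τ hτ).hasDerivAt.const_mul _).sub (hP₁ τ hτ).hasDerivAt
  have hlog := hasDerivAt_add_mul_log_add hs3
  have hC : HasDerivAt (fun σ => -(1 / 16) * ((σ + 3) * Real.log (σ + 3)) + σ * Y₁ σ + Y₂ σ) _ s :=
    ((hlog.const_mul _).add ((hasDerivAt_id' s).mul (hY₁ s hs).hasDerivAt)).add
      (hY₂ s hs).hasDerivAt
  have hE : HasDerivAt (fun σ => Pc σ - 3 / 16 * ((σ + 3) * Real.log (σ + 3)) + σ * Y₂ σ)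
      _ s :=
    ((hPc s hs).hasDerivAt.sub (hlog.const_mul _)).add
      ((hasDerivAt_id' s).mul (hY₂ s hs).hasDerivAt)
  have hP'' := (hP₂ t ht).hasDerivAt
  have hQ'' := hasDerivAt_deriv_of_ode ht3 (hP₁ t ht) hP'' (hQ t ht) (eventually_of_mem hIt hQ')
  refine ⟨?_, ?_⟩
  · rw [orthotoric_eq_of_affine hA.self_of_nhds hB.self_of_nhds hC hE hΓ', hQ' t ht, hPc' s hs]
    field_simp
    ring
  · rw [(hasDerivAt_deriv_fst_of_affine hA hB (hQ''.sub (hP''.const_mul _))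
      ((hQ''.const_mul 3).sub hP'') hΓ' s).deriv]
    field_simp
    ring

/-- Let `I, J ⊆ ℝ` be open intervals with `−3 ∉ I`, `−3 ∉ J`, let
`Π : I → ℝ` (here `Pfun`) be twice differentiable, `Y₁, Y₂ : J → ℝ` differentiable,
`κ₁ ∈ ℝ`.  Suppose `Q : I → ℝ` is differentiable with
`Q′(t) = (Q(t) − κ₁)/(t+3) + ((2t+3)Π′(t) − 2Π(t))/(3(t+3))` on `I`, and `Pc : J → ℝ`
is differentiable with `Pc′(s) = −κ₁ − s²Y₁′(s) − 2sY₂′(s) + (s+3)/16` on `J`.  Define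
`Γ(t,s) = −(1/3)(2s+3)Π(t) + Pc(s) + (s+3)(Q(t) − (1/16)(t+3)log|s+3|)
          + s·t·Y₁(s) + (s+t)Y₂(s)`.
Then for all `(t,s) ∈ I × J`:
(i)  `∂Γ/∂s − ∂Γ/∂t + (s−t)∂²Γ/∂s∂t = 0`  (the orthotoric constraint), and
(ii) `∂²Γ/∂t² = (t−s)Π″(t)/(t+3)`. -/
theorem stmt_17 (I J : Set ℝ)
    (hI : ∃ a b : ℝ, I = Set.Ioo a b) (hJ : ∃ a b : ℝ, J = Set.Ioo a b)
    (hI3 : (-3 : ℝ) ∉ I) (hJ3 : (-3 : ℝ) ∉ J)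
    (Pfun Y₁ Y₂ Q Pc : ℝ → ℝ) (κ₁ : ℝ)
    (hP₁ : ∀ t ∈ I, DifferentiableAt ℝ Pfun t)
    (hP₂ : ∀ t ∈ I, DifferentiableAt ℝ (deriv Pfun) t)
    (hY₁ : ∀ s ∈ J, DifferentiableAt ℝ Y₁ s)
    (hY₂ : ∀ s ∈ J, DifferentiableAt ℝ Y₂ s)
    (hQ : ∀ t ∈ I, DifferentiableAt ℝ Q t)
    (hQ' : ∀ t ∈ I, deriv Q t = (Q t - κ₁) / (t + 3)
        + ((2 * t + 3) * deriv Pfun t - 2 * Pfun t) / (3 * (t + 3)))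
    (hPc : ∀ s ∈ J, DifferentiableAt ℝ Pc s)
    (hPc' : ∀ s ∈ J, deriv Pc s =
        -κ₁ - s ^ 2 * deriv Y₁ s - 2 * s * deriv Y₂ s + (s + 3) / 16)
    (Γ : ℝ → ℝ → ℝ)
    (hΓ : ∀ t s : ℝ, Γ t s =
      -(1 / 3) * (2 * s + 3) * Pfun t + Pc s
        + (s + 3) * (Q t - (1 / 16) * (t + 3) * Real.log (s + 3))
        + s * t * Y₁ s + (s + t) * Y₂ s) :
    ∀ t ∈ I, ∀ s ∈ J,
      (deriv (fun s' => Γ t s') s - deriv (fun t' => Γ t' s) t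
          + (s - t) * deriv (fun s' => deriv (fun t' => Γ t' s') t) s = 0) ∧
      deriv (fun t' => deriv (fun t'' => Γ t'' s) t') t =
        (t - s) * deriv (deriv Pfun) t / (t + 3) :=
  stmt_17_general I J hI hI3 hJ3 Pfun Y₁ Y₂ Q Pc κ₁ hP₁ hP₂ hY₁ hY₂ hQ hQ' hPc hPc' Γ hΓ
end

section
/- Let φ : ℂ[x₁, …, x₉] → ℂ[z₁, z₂, z₃] be the ℂ-algebra homomorphism determined by φ(x₁) = z₁⁴, φ(x₂) = z₁³z₂, φ(x₃) = z₁²z₂², φ(x₄) = z₁z₂³, φ(x₅) = z₂⁴, φ(x₆) = z₁²z₃, φ(x₇) = z₁z₂z₃, φ(x₈) = z₂²z₃, φ(x₉) = z₃². Then the kernel of φ, as an ideal of ℂ[x₁, …, x₉], cannot be generated by six elements: there is no finite set S of polynomials with card S ≤ 6 whose ideal span equals ker φ. -/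
/-!
The nine monomials are minimal generators of the semigroup they span, so no other exponent
vector `n` with `|n| ≤ 1` has the same image: `ker φ` has no terms of degree `< 2`. For such
an ideal, multiplying a generator by `g` changes its degree-2 part only by the factor `g(0)`,
so the degree-2 parts of `ker φ` lie in the `ℂ`-span of those of any generating set. The seven
binomials `x₂² - x₁x₃, …, x₆x₈ - x₃x₉` of `ker φ` have linearly independent degree-2 parts,
hence every generating set has at least seven elements.
-/

open MvPolynomial

/-- The `ℂ`-algebra homomorphism `φ : ℂ[x₁,…,x₉] → ℂ[z₁,z₂,z₃]` sending the nine
variables to the nine invariant monomials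
`z₁⁴, z₁³z₂, z₁²z₂², z₁z₂³, z₂⁴, z₁²z₃, z₁z₂z₃, z₂²z₃, z₃²`. -/
noncomputable def φinv : MvPolynomial (Fin 9) ℂ →ₐ[ℂ] MvPolynomial (Fin 3) ℂ :=
  aeval ![X 0 ^ 4, X 0 ^ 3 * X 1, X 0 ^ 2 * X 1 ^ 2, X 0 * X 1 ^ 3, X 1 ^ 4,
          X 0 ^ 2 * X 2, X 0 * X 1 * X 2, X 1 ^ 2 * X 2, X 2 ^ 2]

namespace MvPolynomial

section MonomialMap

variable {R σ τ : Type*} [CommSemiring R] (v : σ → τ →₀ ℕ)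

theorem aeval_monomial_monomial_one (n : σ →₀ ℕ) (a : R) :
    aeval (fun i => monomial (v i) (1 : R)) (monomial n a) =
      monomial (Finsupp.linearCombination ℕ v n) a := by
  simp only [aeval_monomial, Finsupp.linearCombination_apply, monomial_finsupp_sum_index,
    algebraMap_eq, monomial_pow, one_pow]

theorem coeff_eq_zero_of_aeval_monomial_eq_zero {p : MvPolynomial σ R}
    (hp : aeval (fun i => monomial (v i) (1 : R)) p = 0) {n₀ : σ →₀ ℕ}
    (hfiber : ∀ n, Finsupp.linearCombination ℕ v n = Finsupp.linearCombination ℕ v n₀ → n = n₀) :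
    coeff n₀ p = 0 := by
  classical
  have h := congrArg (coeff (Finsupp.linearCombination ℕ v n₀)) hp
  rw [p.as_sum, map_sum, coeff_sum, coeff_zero] at h
  simp only [aeval_monomial_monomial_one, coeff_monomial] at h
  rwa [Finset.sum_eq_single n₀ (fun n _ hn => if_neg (mt (hfiber n) hn))
    (fun hn => by rw [notMem_support_iff.mp hn, ite_self]), if_pos rfl] at h

end MonomialMap

theorem coeff_mul_eq_constantCoeff_mul {R σ : Type*} [CommSemiring R] {f : MvPolynomial σ R}
    {d : ℕ} (hf : ∀ v : σ →₀ ℕ, v.degree < d → coeff v f = 0) (g : MvPolynomial σ R)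
    {m : σ →₀ ℕ} (hm : m.degree = d) :
    coeff m (g * f) = constantCoeff g * coeff m f := by
  classical
  rw [coeff_mul, Finset.sum_eq_single (0, m), constantCoeff_eq]
  · rintro ⟨u, w⟩ huw hne
    rw [Finset.HasAntidiagonal.mem_antidiagonal] at huw
    have hu : u ≠ 0 := by rintro rfl; exact hne (by simp_all)
    have hdeg : u.degree + w.degree = d := by rw [← map_add, huw, hm]
    have : 0 < u.degree := Nat.pos_of_ne_zero (mt (Finsupp.degree_eq_zero_iff u).mp hu)
    rw [hf w (by omega), mul_zero]
  · simp

theorem card_le_of_span_eq_of_linearIndependent_coeff {K σ ι : Type*} [Field K] [Fintype ι]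
    {I : Ideal (MvPolynomial σ K)} {d : ℕ}
    (hI : ∀ f ∈ I, ∀ v : σ →₀ ℕ, v.degree < d → coeff v f = 0)
    (m : ι → σ →₀ ℕ) (hm : ∀ j, (m j).degree = d)
    (q : ι → MvPolynomial σ K) (hq : ∀ j, q j ∈ I)
    (hind : LinearIndependent K fun j k => coeff (m k) (q j))
    {S : Finset (MvPolynomial σ K)} (hS : Ideal.span S = I) : Fintype.card ι ≤ S.card := by
  classical
  let Q : MvPolynomial σ K →ₗ[K] ι → K := LinearMap.pi fun k => lcoeff K (m k)
  let N := Submodule.span K (S.image Q : Set (ι → K))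
  have hQ : ∀ f ∈ I, Q f ∈ N := by
    rw [← hS]
    intro f hf
    induction hf using Submodule.span_induction with
    | mem s hs => exact Submodule.subset_span (by simpa using ⟨s, hs, rfl⟩)
    | zero => simp
    | add f g _ _ hf hg => rw [map_add]; exact N.add_mem hf hg
    | smul g f hfS hf =>
      have hQmul : Q (g * f) = constantCoeff g • Q f := by
        ext k
        exact coeff_mul_eq_constantCoeff_mul (hI f (hS ▸ hfS)) g (hm k)
      rw [smul_eq_mul, hQmul]
      exact N.smul_mem _ hf
  calc Fintype.card ι = Module.finrank K (Submodule.span K (Set.range fun j => Q (q j))) :=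
        (finrank_span_eq_card hind).symm
    _ ≤ Module.finrank K N :=
        Submodule.finrank_mono <|
          Submodule.span_le.mpr <| Set.range_subset_iff.mpr fun j => hQ _ (hq j)
    _ ≤ (S.image Q).card := finrank_span_finset_le_card _
    _ ≤ S.card := Finset.card_image_le

end MvPolynomial

noncomputable def invariantExponent : Fin 9 → Fin 3 →₀ ℕ :=
  ![Finsupp.single 0 4, Finsupp.single 0 3 + Finsupp.single 1 1,
    Finsupp.single 0 2 + Finsupp.single 1 2, Finsupp.single 0 1 + Finsupp.single 1 3,
    Finsupp.single 1 4, Finsupp.single 0 2 + Finsupp.single 2 1,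
    Finsupp.single 0 1 + Finsupp.single 1 1 + Finsupp.single 2 1,
    Finsupp.single 1 2 + Finsupp.single 2 1, Finsupp.single 2 2]

theorem φinv_eq_aeval_monomial :
    φinv = aeval fun i => monomial (invariantExponent i) (1 : ℂ) := by
  rw [φinv]
  congr 1
  funext i
  fin_cases i <;> simp [invariantExponent, monomial_add_single, ← X_pow_eq_monomial]

theorem linearCombination_invariantExponent (n : Fin 9 →₀ ℕ) :
    Finsupp.linearCombination ℕ invariantExponent n =
      Finsupp.equivFunOnFinite.symm
        ![4 * n 0 + 3 * n 1 + 2 * n 2 + n 3 + 2 * n 5 + n 6,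
          n 1 + 2 * n 2 + 3 * n 3 + 4 * n 4 + n 6 + 2 * n 7,
          n 5 + n 6 + n 7 + 2 * n 8] := by
  ext t
  rw [Finsupp.linearCombination_apply, Finsupp.sum_fintype _ _ (by simp)]
  fin_cases t <;> simp [Fin.sum_univ_succ, invariantExponent] <;> ring

theorem eq_of_linearCombination_invariantExponent_eq {n n₀ : Fin 9 →₀ ℕ}
    (hn₀ : n₀.degree < 2)
    (h : Finsupp.linearCombination ℕ invariantExponent n =
      Finsupp.linearCombination ℕ invariantExponent n₀) : n = n₀ := by
  rw [Finsupp.degree_eq_sum] at hn₀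
  simp only [linearCombination_invariantExponent, EmbeddingLike.apply_eq_iff_eq,
    Matrix.vecCons_inj, and_true] at h
  simp [Fin.sum_univ_succ] at hn₀
  ext k
  fin_cases k <;> simp <;> lia

theorem coeff_eq_zero_of_mem_ker_φinv {f : MvPolynomial (Fin 9) ℂ} (hf : f ∈ RingHom.ker φinv)
    (v : Fin 9 →₀ ℕ) (hv : v.degree < 2) : coeff v f = 0 := by
  rw [RingHom.mem_ker, φinv_eq_aeval_monomial] at hf
  exact coeff_eq_zero_of_aeval_monomial_eq_zero _ hf
    fun n hn => eq_of_linearCombination_invariantExponent_eq hv hn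

-- Pairs of variable indices; index `i : Fin 9` stands for `x_{i+1}`.
def quadricLead : Fin 7 → Fin 9 × Fin 9 :=
  ![(1, 1), (2, 2), (3, 3), (5, 5), (6, 6), (7, 7), (5, 7)]

def quadricTail : Fin 7 → Fin 9 × Fin 9 :=
  ![(0, 2), (1, 3), (2, 4), (0, 8), (2, 8), (4, 8), (2, 8)]

noncomputable def quadraticExponent (p : Fin 9 × Fin 9) : Fin 9 →₀ ℕ :=
  Finsupp.single p.1 1 + Finsupp.single p.2 1

noncomputable def quadric (j : Fin 7) : MvPolynomial (Fin 9) ℂ :=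
  monomial (quadraticExponent (quadricLead j)) 1 -
    monomial (quadraticExponent (quadricTail j)) 1

theorem degree_quadraticExponent (p : Fin 9 × Fin 9) : (quadraticExponent p).degree = 2 := by
  simp [quadraticExponent]

theorem quadric_mem_ker_φinv (j : Fin 7) : quadric j ∈ RingHom.ker φinv := by
  rw [RingHom.mem_ker, φinv_eq_aeval_monomial, quadric, map_sub, aeval_monomial_monomial_one,
    aeval_monomial_monomial_one, sub_eq_zero, linearCombination_invariantExponent,
    linearCombination_invariantExponent]
  fin_cases j <;> simp [quadraticExponent, quadricLead, quadricTail]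

theorem coeff_quadraticExponent_quadric (j : Fin 7) :
    (fun k => coeff (quadraticExponent (quadricLead k)) (quadric j)) = Pi.single j 1 := by
  funext k
  fin_cases j <;> fin_cases k <;>
    simp [quadric, quadraticExponent, quadricLead, quadricTail, coeff_monomial,
      Finsupp.single_add_single_eq_single_add_single one_ne_zero one_ne_zero]

/-- The kernel of `φ` (the defining ideal of `ℂ³/ℤ₄ ⊂ ℂ⁹`) cannot be
generated by six elements: there is no finite set `S` of polynomials with `card S ≤ 6`
whose ideal span equals `ker φ`.  (`ℂ³/ℤ₄` is not a schematic complete intersection.) -/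
theorem stmt_19 :
    ¬ ∃ S : Finset (MvPolynomial (Fin 9) ℂ),
        S.card ≤ 6 ∧ Ideal.span (S : Set (MvPolynomial (Fin 9) ℂ)) = RingHom.ker φinv := by
  rintro ⟨S, hcard, hspan⟩
  have hind :
      LinearIndependent ℂ fun j k => coeff (quadraticExponent (quadricLead k)) (quadric j) :=
    funext coeff_quadraticExponent_quadric ▸ Pi.linearIndependent_single_one (Fin 7) ℂ
  have h7 := card_le_of_span_eq_of_linearIndependent_coeff
    (fun f hf => coeff_eq_zero_of_mem_ker_φinv hf) _ (fun k => degree_quadraticExponent _)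
    quadric quadric_mem_ker_φinv hind hspan
  rw [Fintype.card_fin] at h7
  omega
end
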